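/- If the differential Riccati equations ρP = Ṗ + AᵀP + PA + Q − PBR⁻¹BᵀP, P(T)=0, and ρΠ = Π̇ + (A+G)ᵀΠ + Π(A+G) + (I−Γ)ᵀQ(I−Γ) − ΠBR⁻¹BᵀΠ, Π(T)=0, admit symmetric solutions on [0,T], then the deterministic social cost functional ∑_{i=1}^N ∫₀^T e^{−ρt}(‖y_i(t) − Γy⁽ᴺ⁾(t)‖²_Q + ‖u_i(t)‖²_R) dt, where y_i solves ẏ_i = Ay_i + Gy⁽ᴺ⁾ + Bu_i with y_i(0)=0, is nonnegative for all controls (u₁,…,u_N), i.e., the problem is convex. -/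

import Mathlib

attribute [local instance] Matrix.normedAddCommGroup Matrix.normedSpace

open Matrix MeasureTheory intervalIntegral BigOperators

/-!
Along a solution of `x' = A x + B v` with `x 0 = 0`, a symmetric solution `P` of the Riccati
equation with `P T = 0` makes the discounted cost equal to `∫ e^{-ρt} ‖v + R⁻¹BᵀPx‖²_R`: the two
integrands differ by the derivative of `e^{-ρt} xᵀPx`. The social cost splits into the costs of the
deviations `(yᵢ - y⁽ᴺ⁾, uᵢ - ū)`, which follow `(A, B)`, plus `N` times the cost of the mean
`(y⁽ᴺ⁾, ū)`, which follows `(A + G, B)` with state weight `(1 - Γ)ᵀQ(1 - Γ)` (pointwise this is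
`∑ zᵢᵀQzᵢ = ∑ (zᵢ - z̄)ᵀQ(zᵢ - z̄) + N z̄ᵀQz̄`); `P` handles the former and `Π` the latter.
-/

section Calculus

variable {𝕜 : Type*} [NontriviallyNormedField 𝕜] {m n : Type*} [Fintype n] {t : 𝕜}

theorem HasDerivAt.dotProduct {x y : 𝕜 → n → 𝕜} {x' y' : n → 𝕜}
    (hx : HasDerivAt x x' t) (hy : HasDerivAt y y' t) :
    HasDerivAt (fun s => x s ⬝ᵥ y s) (x' ⬝ᵥ y t + x t ⬝ᵥ y') t := by
  have h := HasDerivAt.fun_sum (u := Finset.univ)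
    fun i _ => (hasDerivAt_pi.1 hx i).fun_mul (hasDerivAt_pi.1 hy i)
  rwa [Finset.sum_add_distrib] at h

theorem HasDerivAt.matrix_mulVec {M : 𝕜 → Matrix m n 𝕜} {M' : Matrix m n 𝕜} {x : 𝕜 → n → 𝕜}
    {x' : n → 𝕜} (hM : HasDerivAt M M' t) (hx : HasDerivAt x x' t) :
    HasDerivAt (fun s => M s *ᵥ x s) (M' *ᵥ x t + M t *ᵥ x') t :=
  hasDerivAt_pi.2 fun i => (hasDerivAt_pi.1 hM i).dotProduct hx

end Calculus

section LinearQuadratic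

variable {m k : Type*} [Fintype m] [Fintype k]

theorem Matrix.IsSymm.dotProduct_mulVec_comm {α : Type*} [CommSemiring α] {S : Matrix m m α}
    (hS : S.IsSymm) (a b : m → α) : a ⬝ᵥ S *ᵥ b = b ⬝ᵥ S *ᵥ a := by
  rw [← dotProduct_transpose_mulVec, hS.eq]

theorem riccati_completion_of_squares [DecidableEq k] {ρ : ℝ} {A P P' Q : Matrix m m ℝ}
    {B : Matrix m k ℝ} {R : Matrix k k ℝ} (hP : P.IsSymm) (hRs : R.IsSymm) (hR : IsUnit R.det)
    (hric : ρ • P = P' + Aᵀ * P + P * A + Q - P * B * R⁻¹ * Bᵀ * P) (x : m → ℝ) (v : k → ℝ) :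
    (A *ᵥ x + B *ᵥ v) ⬝ᵥ P *ᵥ x + x ⬝ᵥ (P' *ᵥ x + P *ᵥ (A *ᵥ x + B *ᵥ v)) - ρ * (x ⬝ᵥ P *ᵥ x)
      = (v + R⁻¹ *ᵥ Bᵀ *ᵥ P *ᵥ x) ⬝ᵥ R *ᵥ (v + R⁻¹ *ᵥ Bᵀ *ᵥ P *ᵥ x)
        - (x ⬝ᵥ Q *ᵥ x + v ⬝ᵥ R *ᵥ v) := by
  set s := R⁻¹ *ᵥ Bᵀ *ᵥ P *ᵥ x
  have hRs_eq : R *ᵥ s = Bᵀ *ᵥ P *ᵥ x := by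
    rw [mulVec_mulVec, mul_nonsing_inv R hR, one_mulVec]
  have hP' : P' = ρ • P - Aᵀ * P - P * A - Q + P * B * R⁻¹ * Bᵀ * P := by
    rw [hric]; abel
  have hsymm : ∀ y : m → ℝ, x ⬝ᵥ P *ᵥ y = (P *ᵥ x) ⬝ᵥ y := fun y => by
    rw [hP.dotProduct_mulVec_comm, dotProduct_comm]
  have hcross : ∀ y : k → ℝ, x ⬝ᵥ P *ᵥ B *ᵥ y = y ⬝ᵥ R *ᵥ s := fun y => by
    rw [hRs_eq, dotProduct_transpose_mulVec, hsymm]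
  have hgain : x ⬝ᵥ (P * B * R⁻¹ * Bᵀ * P) *ᵥ x = s ⬝ᵥ R *ᵥ s := by
    rw [← hcross]
    simp only [s, mulVec_mulVec, Matrix.mul_assoc]
  have hdrift : (A *ᵥ x) ⬝ᵥ P *ᵥ x + x ⬝ᵥ P *ᵥ A *ᵥ x
      = x ⬝ᵥ (Aᵀ * P) *ᵥ x + x ⬝ᵥ (P * A) *ᵥ x := by
    rw [← mulVec_mulVec, ← mulVec_mulVec, dotProduct_transpose_mulVec, dotProduct_comm]
  have hcontrol : (B *ᵥ v) ⬝ᵥ P *ᵥ x = v ⬝ᵥ R *ᵥ s := by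
    rw [dotProduct_comm, ← hsymm, hcross]
  rw [hP']
  simp only [add_mulVec, sub_mulVec, smul_mulVec, mulVec_add, add_dotProduct, dotProduct_add,
    dotProduct_sub, dotProduct_smul, smul_eq_mul]
  linear_combination hdrift + hgain + hcontrol + hcross v - hRs.dotProduct_mulVec_comm s v

noncomputable def discountedCost (ρ T : ℝ) (Q : Matrix m m ℝ) (R : Matrix k k ℝ) (x : ℝ → m → ℝ)
    (v : ℝ → k → ℝ) : ℝ :=
  ∫ t in (0:ℝ)..T, Real.exp (-ρ * t) * (x t ⬝ᵥ Q *ᵥ x t + v t ⬝ᵥ R *ᵥ v t)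

theorem discountedCost_mulVec (ρ T : ℝ) (M Q : Matrix m m ℝ) (R : Matrix k k ℝ)
    (x : ℝ → m → ℝ) (v : ℝ → k → ℝ) :
    discountedCost ρ T Q R (fun t => M *ᵥ x t) v = discountedCost ρ T (Mᵀ * Q * M) R x v := by
  simp only [discountedCost, ← mulVec_mulVec, dotProduct_transpose_mulVec, dotProduct_comm (Q *ᵥ _)]

theorem discountedCost_nonneg_of_riccati [DecidableEq k] {ρ T : ℝ} (hT : 0 ≤ T)
    {A Q : Matrix m m ℝ} {B : Matrix m k ℝ} {R : Matrix k k ℝ} (hR : R.PosDef)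
    {P P' : ℝ → Matrix m m ℝ} (hP : ∀ t, HasDerivAt P (P' t) t) (hPs : ∀ t, (P t).IsSymm)
    (hric : ∀ t, ρ • P t = P' t + Aᵀ * P t + P t * A + Q - P t * B * R⁻¹ * Bᵀ * P t)
    (hPT : P T = 0) {x : ℝ → m → ℝ} {v : ℝ → k → ℝ} (hv : Continuous v)
    (hx : ∀ t, HasDerivAt x (A *ᵥ x t + B *ᵥ v t) t) (hx0 : x 0 = 0) :
    0 ≤ discountedCost ρ T Q R x v := by
  have hRs : R.IsSymm := isHermitian_iff_isSymm.1 hR.isHermitian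
  have hRdet : IsUnit R.det := (isUnit_iff_isUnit_det R).1 hR.isUnit
  have hxc : Continuous x := Differentiable.continuous fun t => (hx t).differentiableAt
  have hPc : Continuous P := Differentiable.continuous fun t => (hP t).differentiableAt
  set w := fun t => v t + R⁻¹ *ᵥ Bᵀ *ᵥ P t *ᵥ x t
  set cost := fun t => Real.exp (-ρ * t) * (x t ⬝ᵥ Q *ᵥ x t + v t ⬝ᵥ R *ᵥ v t)
  have hderiv : ∀ t, HasDerivAt (fun t => Real.exp (-ρ * t) * (x t ⬝ᵥ P t *ᵥ x t))
      (Real.exp (-ρ * t) * (w t ⬝ᵥ R *ᵥ w t) - cost t) t := fun t => by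
    have hexp : HasDerivAt (fun t => Real.exp (-ρ * t)) (Real.exp (-ρ * t) * -ρ) t := by
      simpa using ((hasDerivAt_id t).const_mul (-ρ)).exp
    refine (hexp.fun_mul ((hx t).dotProduct ((hP t).matrix_mulVec (hx t)))).congr_deriv ?_
    linear_combination Real.exp (-ρ * t) *
      riccati_completion_of_squares (hPs t) hRs hRdet (hric t) (x t) (v t)
  have hboundary : ∫ t in (0:ℝ)..T, (Real.exp (-ρ * t) * (w t ⬝ᵥ R *ᵥ w t) - cost t) = 0 := by
    rw [integral_eq_sub_of_hasDerivAt (fun t _ => hderiv t)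
      (Continuous.intervalIntegrable (by fun_prop) _ _)]
    simp [hPT, hx0]
  calc 0 ≤ ∫ t in (0:ℝ)..T, Real.exp (-ρ * t) * (w t ⬝ᵥ R *ᵥ w t) :=
        integral_nonneg hT fun t _ => mul_nonneg (Real.exp_pos _).le
          (by simpa using hR.posSemidef.dotProduct_mulVec_nonneg (w t))
    _ = (∫ t in (0:ℝ)..T, Real.exp (-ρ * t) * (w t ⬝ᵥ R *ᵥ w t))
          - ∫ t in (0:ℝ)..T, (Real.exp (-ρ * t) * (w t ⬝ᵥ R *ᵥ w t) - cost t) := by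
        rw [hboundary, sub_zero]
    _ = discountedCost ρ T Q R x v := by
        rw [← integral_sub (Continuous.intervalIntegrable (by fun_prop) _ _)
          (Continuous.intervalIntegrable (by fun_prop) _ _)]
        simp only [sub_sub_cancel]
        rfl

section MeanField

variable {ι : Type*} [Fintype ι]

theorem sum_dotProduct_mulVec_eq_sum_sub_add_card_smul {α : Type*} [CommRing α]
    (M : Matrix m m α) (z : ι → m → α) (zb : m → α) (hz : ∑ i, z i = Fintype.card ι • zb) :
    ∑ i, z i ⬝ᵥ M *ᵥ z i
      = ∑ i, (z i - zb) ⬝ᵥ M *ᵥ (z i - zb) + Fintype.card ι • (zb ⬝ᵥ M *ᵥ zb) := by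
  simp only [sub_dotProduct, mulVec_sub, dotProduct_sub, Finset.sum_sub_distrib, Finset.sum_const,
    Finset.card_univ]
  rw [← sum_dotProduct, ← dotProduct_sum, ← mulVec_sum, hz, smul_dotProduct, mulVec_smul,
    dotProduct_smul]
  abel

theorem sum_discountedCost_eq_sum_sub_add_card_mul (ρ T : ℝ) (Q : Matrix m m ℝ)
    (R : Matrix k k ℝ) {z : ι → ℝ → m → ℝ} {zb : ℝ → m → ℝ} {u : ι → ℝ → k → ℝ} {ub : ℝ → k → ℝ}
    (hz : ∀ t, ∑ i, z i t = Fintype.card ι • zb t) (hu : ∀ t, ∑ i, u i t = Fintype.card ι • ub t)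
    (hzc : ∀ i, Continuous (z i)) (hzbc : Continuous zb) (huc : ∀ i, Continuous (u i))
    (hubc : Continuous ub) :
    ∑ i, discountedCost ρ T Q R (z i) (u i)
      = ∑ i, discountedCost ρ T Q R (fun t => z i t - zb t) (fun t => u i t - ub t)
        + Fintype.card ι * discountedCost ρ T Q R zb ub := by
  simp only [discountedCost]
  rw [← integral_finsetSum fun i _ => Continuous.intervalIntegrable (by fun_prop) _ _,
    ← integral_finsetSum fun i _ => Continuous.intervalIntegrable (by fun_prop) _ _,
    ← intervalIntegral.integral_const_mul, ← integral_add
      (Continuous.intervalIntegrable (by fun_prop) _ _)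
      (Continuous.intervalIntegrable (by fun_prop) _ _)]
  congr 1 with t
  rw [← Finset.mul_sum, ← Finset.mul_sum, Finset.sum_add_distrib, Finset.sum_add_distrib,
    sum_dotProduct_mulVec_eq_sum_sub_add_card_smul Q _ _ (hz t),
    sum_dotProduct_mulVec_eq_sum_sub_add_card_smul R _ _ (hu t), nsmul_eq_mul, nsmul_eq_mul]
  ring

theorem hasDerivAt_mean [Nonempty ι] {A G : Matrix m m ℝ} {B : Matrix m k ℝ}
    {y : ι → ℝ → m → ℝ} {u : ι → ℝ → k → ℝ} {yN : ℝ → m → ℝ} {uN : ℝ → k → ℝ}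
    (hyN : ∀ t, ∑ j, y j t = Fintype.card ι • yN t) (huN : ∀ t, ∑ j, u j t = Fintype.card ι • uN t)
    (hy : ∀ i t, HasDerivAt (y i) (A *ᵥ y i t + G *ᵥ yN t + B *ᵥ u i t) t) (t : ℝ) :
    HasDerivAt yN ((A + G) *ᵥ yN t + B *ᵥ uN t) t := by
  have hcancel : ∀ v : m → ℝ, (Fintype.card ι : ℝ)⁻¹ • Fintype.card ι • v = v := fun v => by
    rw [← Nat.cast_smul_eq_nsmul ℝ, inv_smul_smul₀ (Nat.cast_ne_zero.2 Fintype.card_ne_zero)]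
  refine (((HasDerivAt.fun_sum (u := Finset.univ) fun j _ => hy j t).const_smul
    (Fintype.card ι : ℝ)⁻¹).congr_of_eventuallyEq
      (.of_forall fun s => by simp only [Pi.smul_apply, hyN, hcancel])).congr_deriv ?_
  rw [Finset.sum_add_distrib, Finset.sum_add_distrib, Finset.sum_const, Finset.card_univ,
    ← mulVec_sum, ← mulVec_sum, hyN, huN, mulVec_smul, mulVec_smul, ← smul_add, ← smul_add,
    hcancel, add_mulVec]

end MeanField

end LinearQuadratic

theorem social_cost_convexity_general
    (n r N : ℕ) (ρ T : ℝ) (hT : 0 < T)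
    (A G Γ Q : Matrix (Fin n) (Fin n) ℝ)
    (B : Matrix (Fin n) (Fin r) ℝ) (R : Matrix (Fin r) (Fin r) ℝ)
    (hR : R.PosDef)
    (P Pi : ℝ → Matrix (Fin n) (Fin n) ℝ)
    (P' Pi' : ℝ → Matrix (Fin n) (Fin n) ℝ)
    (hPderiv : ∀ t, HasDerivAt P (P' t) t)
    (hPiDeriv : ∀ t, HasDerivAt Pi (Pi' t) t)
    (hPsymm : ∀ t, (P t).IsSymm) (hPiSymm : ∀ t, (Pi t).IsSymm)
    (hPric : ∀ t, ρ • P t = P' t + Aᵀ * P t + P t * A + Q - P t * B * R⁻¹ * Bᵀ * P t)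
    (hPT : P T = 0)
    (hPiric : ∀ t, ρ • Pi t = Pi' t + (A + G)ᵀ * Pi t + Pi t * (A + G)
        + (1 - Γ)ᵀ * Q * (1 - Γ) - Pi t * B * R⁻¹ * Bᵀ * Pi t)
    (hPiT : Pi T = 0)
    (u : Fin N → ℝ → (Fin r → ℝ)) (hu : ∀ i, Continuous (u i))
    (y : Fin N → ℝ → (Fin n → ℝ))
    (yN : ℝ → (Fin n → ℝ)) (hyN : ∀ t, yN t = (N : ℝ)⁻¹ • ∑ j, y j t)
    (hyode : ∀ i t, HasDerivAt (y i)
        (A.mulVec (y i t) + G.mulVec (yN t) + B.mulVec (u i t)) t)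
    (hy0 : ∀ i, y i 0 = 0) :
    0 ≤ ∑ i, ∫ t in (0:ℝ)..T, Real.exp (-ρ * t) *
        ((y i t - Γ.mulVec (yN t)) ⬝ᵥ Q.mulVec (y i t - Γ.mulVec (yN t))
          + (u i t) ⬝ᵥ R.mulVec (u i t)) := by
  obtain rfl | hN := eq_or_ne N 0
  · simp
  have : NeZero N := ⟨hN⟩
  set uN : ℝ → Fin r → ℝ := fun t => (N : ℝ)⁻¹ • ∑ j, u j t
  have hyNsum : ∀ t, ∑ j, y j t = N • yN t := fun t => by
    rw [hyN, ← Nat.cast_smul_eq_nsmul ℝ, smul_inv_smul₀ (Nat.cast_ne_zero.2 hN)]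
  have huNsum : ∀ t, ∑ j, u j t = N • uN t := fun t => by
    rw [← Nat.cast_smul_eq_nsmul ℝ, smul_inv_smul₀ (Nat.cast_ne_zero.2 hN)]
  have hmean : ∀ t, HasDerivAt yN ((A + G) *ᵥ yN t + B *ᵥ uN t) t :=
    hasDerivAt_mean (by simpa using hyNsum) (by simpa using huNsum) hyode
  have hdev : ∀ i t, HasDerivAt (fun s => y i s - yN s)
      (A *ᵥ (y i t - yN t) + B *ᵥ (u i t - uN t)) t := fun i t =>
    ((hyode i t).sub (hmean t)).congr_deriv (by simp only [mulVec_sub, add_mulVec]; abel)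
  have hyc : ∀ i, Continuous (y i) := fun i =>
    Differentiable.continuous fun t => (hyode i t).differentiableAt
  have hyNc : Continuous yN := Differentiable.continuous fun t => (hmean t).differentiableAt
  have hyN0 : yN 0 = 0 := by simp [hyN, hy0]
  have huNc : Continuous uN := by fun_prop
  change 0 ≤ ∑ i, discountedCost ρ T Q R (fun t => y i t - Γ *ᵥ yN t) (u i)
  rw [sum_discountedCost_eq_sum_sub_add_card_mul ρ T Q R (zb := fun t => (1 - Γ) *ᵥ yN t)
    (fun t => by simp [Finset.sum_sub_distrib, hyNsum, sub_mulVec, smul_sub])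
    (by simpa using huNsum) (fun i => by fun_prop) (by fun_prop) hu huNc, discountedCost_mulVec]
  simp only [sub_mulVec, one_mulVec, sub_sub_sub_cancel_right]
  exact add_nonneg
    (Finset.sum_nonneg fun i _ => discountedCost_nonneg_of_riccati hT.le hR hPderiv hPsymm hPric
      hPT ((hu i).sub huNc) (hdev i) (by simp [hy0, hyN0]))
    (mul_nonneg (Nat.cast_nonneg _) (discountedCost_nonneg_of_riccati hT.le hR hPiDeriv hPiSymm
      hPiric hPiT huNc hmean hyN0))

theorem social_cost_convexity
    (n r N : ℕ) (ρ T : ℝ) (hT : 0 < T)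
    (A G Γ Q : Matrix (Fin n) (Fin n) ℝ) (hQ : Q.IsSymm)
    (B : Matrix (Fin n) (Fin r) ℝ) (R : Matrix (Fin r) (Fin r) ℝ)
    (hR : R.PosDef) (hRs : R.IsSymm)
    (P Pi : ℝ → Matrix (Fin n) (Fin n) ℝ)
    (P' Pi' : ℝ → Matrix (Fin n) (Fin n) ℝ)
    (hPderiv : ∀ t, HasDerivAt P (P' t) t)
    (hPiDeriv : ∀ t, HasDerivAt Pi (Pi' t) t)
    (hPsymm : ∀ t, (P t).IsSymm) (hPiSymm : ∀ t, (Pi t).IsSymm)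
    (hPric : ∀ t, ρ • P t = P' t + Aᵀ * P t + P t * A + Q - P t * B * R⁻¹ * Bᵀ * P t)
    (hPT : P T = 0)
    (hPiric : ∀ t, ρ • Pi t = Pi' t + (A + G)ᵀ * Pi t + Pi t * (A + G)
        + (1 - Γ)ᵀ * Q * (1 - Γ) - Pi t * B * R⁻¹ * Bᵀ * Pi t)
    (hPiT : Pi T = 0)
    (u : Fin N → ℝ → (Fin r → ℝ)) (hu : ∀ i, Continuous (u i))
    (y : Fin N → ℝ → (Fin n → ℝ))
    (yN : ℝ → (Fin n → ℝ)) (hyN : ∀ t, yN t = (N : ℝ)⁻¹ • ∑ j, y j t)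
    (hyode : ∀ i t, HasDerivAt (y i)
        (A.mulVec (y i t) + G.mulVec (yN t) + B.mulVec (u i t)) t)
    (hy0 : ∀ i, y i 0 = 0) :
    0 ≤ ∑ i, ∫ t in (0:ℝ)..T, Real.exp (-ρ * t) *
        ((y i t - Γ.mulVec (yN t)) ⬝ᵥ Q.mulVec (y i t - Γ.mulVec (yN t))
          + (u i t) ⬝ᵥ R.mulVec (u i t)) :=
  social_cost_convexity_general n r N ρ T hT A G Γ Q B R hR P Pi P' Pi' hPderiv hPiDeriv hPsymm
    hPiSymm hPric hPT hPiric hPiT u hu y yN hyN hyode hy0
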